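/- arXiv:1505.04967 — 6 statements merged into one kernel-verified Lean document; each statement's English description precedes it below -/
import Mathlib

section
/- A continuous and locally injective function f from a closed interval [a,b] (with a < b) to the real numbers is either strictly increasing or strictly decreasing. -/
open Set

/-- At an interior point, a continuous locally injective function is strictly monotone
on a small closed interval. -/
lemma aux_local_mono (a b : ℝ) (f : ℝ → ℝ)
    (hcont : ContinuousOn f (Set.Icc a b))
    (hloc : ∀ x ∈ Set.Icc a b, ∃ U ∈ nhdsWithin x (Set.Icc a b), Set.InjOn f U)
    (c : ℝ) (hc : c ∈ Set.Ioo a b) :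
    ∃ δ > 0, Set.Icc (c - δ) (c + δ) ⊆ Set.Icc a b ∧
      (StrictMonoOn f (Set.Icc (c - δ) (c + δ)) ∨ StrictAntiOn f (Set.Icc (c - δ) (c + δ))) := by
  obtain ⟨U, hU, hUinj⟩ := hloc c ⟨hc.1.le, hc.2.le⟩
  have hmem : Set.Icc a b ∈ nhds c := Icc_mem_nhds hc.1 hc.2
  have hU' : U ∈ nhds c := by
    rw [nhdsWithin_eq_nhds.mpr hmem] at hU; exact hU
  obtain ⟨ε, hε, hball⟩ := Metric.mem_nhds_iff.mp (Filter.inter_mem hU' hmem)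
  set δ : ℝ := min (ε / 2) (min (c - a) (b - c)) with hδdef
  have hδpos : 0 < δ := by
    apply lt_min (by linarith) (lt_min (by linarith [hc.1]) (by linarith [hc.2]))
  refine ⟨δ, hδpos, ?_, ?_⟩
  · intro x hx
    constructor
    · have : δ ≤ c - a := le_trans (min_le_right _ _) (min_le_left _ _)
      linarith [hx.1]
    · have : δ ≤ b - c := le_trans (min_le_right _ _) (min_le_right _ _)
      linarith [hx.2]
  · have hsub : Set.Icc (c - δ) (c + δ) ⊆ U ∩ Set.Icc a b := by
      intro x hx
      apply hball
      rw [Metric.mem_ball, Real.dist_eq, abs_lt]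
      have : δ ≤ ε / 2 := min_le_left _ _
      constructor <;> [linarith [hx.1]; linarith [hx.2]]
    have hsubU : Set.Icc (c - δ) (c + δ) ⊆ U := fun x hx => (hsub hx).1
    have hsubab : Set.Icc (c - δ) (c + δ) ⊆ Set.Icc a b := fun x hx => (hsub hx).2
    exact ContinuousOn.strictMonoOn_of_injOn_Icc' (by linarith)
      (hcont.mono hsubab) (hUinj.mono hsubU)

lemma aux_inj (a b : ℝ) (hab : a < b) (f : ℝ → ℝ)
    (hcont : ContinuousOn f (Set.Icc a b))
    (hloc : ∀ x ∈ Set.Icc a b, ∃ U ∈ nhdsWithin x (Set.Icc a b), Set.InjOn f U) :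
    Set.InjOn f (Set.Icc a b) := by
  intro u hu v hv hfuv
  by_contra hne
  -- wlog u < v
  wlog huv : u < v generalizing u v
  · exact this hv hu hfuv.symm (Ne.symm hne) (lt_of_le_of_ne (not_lt.mp huv) (Ne.symm hne))
  clear hne
  -- f attains max and min on [u,v]
  have hsub : Set.Icc u v ⊆ Set.Icc a b := Set.Icc_subset_Icc hu.1 hv.2
  have hcont' : ContinuousOn f (Set.Icc u v) := hcont.mono hsub
  have hne' : (Set.Icc u v).Nonempty := Set.nonempty_Icc.mpr huv.le
  obtain ⟨cM, hcM, hmax⟩ := isCompact_Icc.exists_isMaxOn hne' hcont'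
  obtain ⟨cm, hcm, hmin⟩ := isCompact_Icc.exists_isMinOn hne' hcont'
  -- derive contradiction from a point c in (u,v) and a monotone interval through it
  have key : ∀ c ∈ Set.Ioo u v,
      (∀ x ∈ Set.Icc u v, f x ≤ f c) ∨ (∀ x ∈ Set.Icc u v, f c ≤ f x) → False := by
    intro c hc hext
    have hcab : c ∈ Set.Ioo a b := ⟨lt_of_le_of_lt hu.1 hc.1, lt_of_lt_of_le hc.2 hv.2⟩
    obtain ⟨δ, hδ, hsubab, hmono⟩ := aux_local_mono a b f hcont hloc c hcab
    set δ' : ℝ := min δ (min (c - u) (v - c)) with hδ'def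
    have hδ'pos : 0 < δ' :=
      lt_min hδ (lt_min (by linarith [hc.1]) (by linarith [hc.2]))
    have h1 : c - δ' ∈ Set.Icc (c - δ) (c + δ) := by
      constructor <;> [linarith [min_le_left δ (min (c-u) (v-c))]; linarith]
    have h2 : c ∈ Set.Icc (c - δ) (c + δ) := by constructor <;> linarith
    have h3 : c + δ' ∈ Set.Icc (c - δ) (c + δ) := by
      constructor <;> [linarith; linarith [min_le_left δ (min (c-u) (v-c))]]
    have h1' : c - δ' ∈ Set.Icc u v := by
      have : δ' ≤ c - u := le_trans (min_le_right _ _) (min_le_left _ _)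
      constructor <;> linarith [hc.2.le]
    have h3' : c + δ' ∈ Set.Icc u v := by
      have : δ' ≤ v - c := le_trans (min_le_right _ _) (min_le_right _ _)
      constructor <;> linarith [hc.1.le]
    rcases hext with hext | hext
    · rcases hmono with hm | hm
      · exact absurd (hext _ h3') (not_le.mpr (hm h2 h3 (by linarith)))
      · exact absurd (hext _ h1') (not_le.mpr (hm h1 h2 (by linarith)))
    · rcases hmono with hm | hm
      · exact absurd (hext _ h1') (not_le.mpr (hm h1 h2 (by linarith)))
      · exact absurd (hext _ h3') (not_le.mpr (hm h2 h3 (by linarith)))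
  by_cases hM : f u < f cM
  · -- max attained in interior
    have hcMne : cM ≠ u ∧ cM ≠ v := by
      constructor <;> rintro rfl
      · exact lt_irrefl _ hM
      · rw [hfuv] at hM; exact lt_irrefl _ hM
    exact key cM ⟨lt_of_le_of_ne hcM.1 (Ne.symm hcMne.1), lt_of_le_of_ne hcM.2 hcMne.2⟩
      (Or.inl fun x hx => hmax hx)
  · by_cases hm : f cm < f u
    · have hcmne : cm ≠ u ∧ cm ≠ v := by
        constructor <;> rintro rfl
        · exact lt_irrefl _ hm
        · rw [hfuv] at hm; exact lt_irrefl _ hm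
      exact key cm ⟨lt_of_le_of_ne hcm.1 (Ne.symm hcmne.1), lt_of_le_of_ne hcm.2 hcmne.2⟩
        (Or.inr fun x hx => hmin hx)
    · -- f is constant on [u,v]
      have hconst : ∀ x ∈ Set.Icc u v, f x = f u := by
        intro x hx
        have h1 : f x ≤ f cM := hmax hx
        have h2 : f cm ≤ f x := hmin hx
        push_neg at hM hm
        linarith
      set c := (u + v) / 2 with hcdef
      have hcmem : c ∈ Set.Ioo u v := ⟨by linarith, by linarith⟩
      exact key c hcmem (Or.inl fun x hx => by
        rw [hconst x hx, hconst c ⟨hcmem.1.le, hcmem.2.le⟩])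

/-- A continuous, locally injective function on a closed interval `[a,b]` (with `a < b`)
is either strictly increasing or strictly decreasing on `[a,b]`. -/
theorem continuous_locally_injective_strictMono_or_strictAnti
    (a b : ℝ) (hab : a < b) (f : ℝ → ℝ)
    (hcont : ContinuousOn f (Set.Icc a b))
    (hloc : ∀ x ∈ Set.Icc a b, ∃ U ∈ nhdsWithin x (Set.Icc a b),
      Set.InjOn f U) :
    StrictMonoOn f (Set.Icc a b) ∨ StrictAntiOn f (Set.Icc a b) := by
  exact ContinuousOn.strictMonoOn_of_injOn_Icc' hab.le hcont
    (aux_inj a b hab f hcont hloc)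
end

section
/- If f : [a,b] → ℝ is continuous and locally injective, then the image f([a,b]) is a closed interval whose endpoints are f(a) and f(b) (i.e., f([a,b]) is the segment between f(a) and f(b)). -/
open Set

/-- Auxiliary lemma: under the same hypotheses, `f x ≤ max (f a) (f b)` on `[a,b]`. -/
lemma aux_le_max_endpoints
    (a b : ℝ) (hab : a ≤ b) (f : ℝ → ℝ)
    (hcont : ContinuousOn f (Set.Icc a b))
    (hloc : ∀ x ∈ Set.Icc a b, ∃ U ∈ nhdsWithin x (Set.Icc a b),
      Set.InjOn f U) :
    ∀ x ∈ Set.Icc a b, f x ≤ max (f a) (f b) := by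
  by_contra h
  push_neg at h
  obtain ⟨x, hx, hxgt⟩ := h
  obtain ⟨c, hc, hcmax⟩ := isCompact_Icc.exists_isMaxOn ⟨x, hx⟩ hcont
  have hfc : max (f a) (f b) < f c := lt_of_lt_of_le hxgt (hcmax hx)
  have hfa : f a < f c := lt_of_le_of_lt (le_max_left _ _) hfc
  have hfb : f b < f c := lt_of_le_of_lt (le_max_right _ _) hfc
  have hca : a < c := lt_of_le_of_ne hc.1 (fun h => by rw [← h] at hfa; exact lt_irrefl _ hfa)
  have hcb : c < b := lt_of_le_of_ne hc.2 (fun h => by rw [h] at hfb; exact lt_irrefl _ hfb)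
  obtain ⟨U, hU, hinj⟩ := hloc c hc
  have hmem : Set.Icc a b ∈ nhds c := Icc_mem_nhds hca hcb
  rw [nhdsWithin_eq_nhds.2 hmem] at hU
  obtain ⟨δ, hδ, hball⟩ := Metric.mem_nhds_iff.1 hU
  set ε := min (δ / 2) (min (c - a) (b - c)) with hε
  have hεpos : 0 < ε := lt_min (by linarith) (lt_min (by linarith) (by linarith))
  have hεδ : ε < δ := lt_of_le_of_lt (min_le_left _ _) (by linarith)
  have hεa : a ≤ c - ε := by
    have : ε ≤ c - a := le_trans (min_le_right _ _) (min_le_left _ _)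
    linarith
  have hεb : c + ε ≤ b := by
    have : ε ≤ b - c := le_trans (min_le_right _ _) (min_le_right _ _)
    linarith
  -- the interval [c-ε, c+ε] is inside U and inside Icc a b
  have hsubU : Set.Icc (c - ε) (c + ε) ⊆ U := by
    intro y hy
    apply hball
    rw [Metric.mem_ball, Real.dist_eq, abs_lt]
    constructor <;> [linarith [hy.1]; linarith [hy.2]]
  have hsubI : Set.Icc (c - ε) (c + ε) ⊆ Set.Icc a b := by
    intro y hy; exact ⟨le_trans hεa hy.1, le_trans hy.2 hεb⟩
  have hp : c - ε ∈ Set.Icc (c - ε) (c + ε) := ⟨le_refl _, by linarith⟩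
  have hq : c + ε ∈ Set.Icc (c - ε) (c + ε) := ⟨by linarith, le_refl _⟩
  have hcmem : c ∈ Set.Icc (c - ε) (c + ε) := ⟨by linarith, by linarith⟩
  have hfp : f (c - ε) ≤ f c := hcmax (hsubI hp)
  have hfq : f (c + ε) ≤ f c := hcmax (hsubI hq)
  -- strictness: otherwise injectivity fails directly
  have hfp' : f (c - ε) < f c := by
    rcases lt_or_eq_of_le hfp with h | h
    · exact h
    · exact absurd (hinj (hsubU hp) (hsubU hcmem) h) (by intro he; linarith [hεpos, he ▸ (rfl : c - ε = c - ε)])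
  have hfq' : f (c + ε) < f c := by
    rcases lt_or_eq_of_le hfq with h | h
    · exact h
    · exact absurd (hinj (hsubU hq) (hsubU hcmem) h) (fun he => by linarith [hεpos, show c + ε = c from he])
  set y := max (f (c - ε)) (f (c + ε)) with hy
  have hyc : y < f c := max_lt hfp' hfq'
  -- IVT on [c-ε, c]
  have h1 : Set.Icc (f (c - ε)) (f c) ⊆ f '' Set.Icc (c - ε) c :=
    intermediate_value_Icc (by linarith) (hcont.mono (fun z hz => hsubI ⟨hz.1, by linarith [hz.2]⟩))
  have h2 : Set.Icc (f (c + ε)) (f c) ⊆ f '' Set.Icc c (c + ε) :=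
    intermediate_value_Icc' (by linarith) (hcont.mono (fun z hz => hsubI ⟨by linarith [hz.1], hz.2⟩))
  obtain ⟨x₁, hx₁, hfx₁⟩ := h1 ⟨le_max_left _ _, le_of_lt hyc⟩
  obtain ⟨x₂, hx₂, hfx₂⟩ := h2 ⟨le_max_right _ _, le_of_lt hyc⟩
  have hx₁U : x₁ ∈ U := hsubU ⟨hx₁.1, by linarith [hx₁.2]⟩
  have hx₂U : x₂ ∈ U := hsubU ⟨by linarith [hx₂.1], hx₂.2⟩
  have heq : x₁ = x₂ := hinj hx₁U hx₂U (by rw [hfx₁, hfx₂])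
  have : x₁ = c := le_antisymm hx₁.2 (heq ▸ hx₂.1)
  rw [this] at hfx₁
  linarith

/-- If `f : [a,b] → ℝ` is continuous and locally injective, then the image `f([a,b])`
is the closed segment between `f a` and `f b`. -/
theorem image_eq_uIcc_of_continuous_locally_injective
    (a b : ℝ) (hab : a ≤ b) (f : ℝ → ℝ)
    (hcont : ContinuousOn f (Set.Icc a b))
    (hloc : ∀ x ∈ Set.Icc a b, ∃ U ∈ nhdsWithin x (Set.Icc a b),
      Set.InjOn f U) :
    f '' Set.Icc a b = Set.uIcc (f a) (f b) := by
  apply Set.Subset.antisymm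
  · -- image ⊆ uIcc
    have hmax := aux_le_max_endpoints a b hab f hcont hloc
    have hmin := aux_le_max_endpoints a b hab (-f) (hcont.neg)
      (by
        intro x hx
        obtain ⟨U, hU, hinj⟩ := hloc x hx
        exact ⟨U, hU, fun u hu v hv h => hinj hu hv (by
          have : -(f u) = -(f v) := h
          linarith)⟩)
    rintro _ ⟨x, hx, rfl⟩
    rw [Set.uIcc, Set.mem_Icc]
    constructor
    · have := hmin x hx
      simp only [Pi.neg_apply] at this
      rcases le_total (f a) (f b) with h | h
      · rw [min_eq_left h]
        have h2 : -f x ≤ -f a := le_trans this (max_le le_rfl (by linarith))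
        linarith
      · rw [min_eq_right h]
        have h2 : -f x ≤ -f b := le_trans this (max_le (by linarith) le_rfl)
        linarith
    · exact hmax x hx
  · -- uIcc ⊆ image
    have := intermediate_value_uIcc (f := f) (a := a) (b := b)
      (by rwa [Set.uIcc_of_le hab])
    rwa [Set.uIcc_of_le hab] at this
end

section
/- Let p ∈ ℝ[x,y], and suppose there exist sets B ⊂ A ⊂ ℝ² such that: B is bounded; for every t ∈ ℝ the set p⁻¹(t) ∩ A is either empty, contained in B, or homeomorphic to a closed segment with both endpoints in B; and the boundary of A contains a half-line. Then for every q ∈ ℝ[x,y] there exists v ∈ ℝ² with Jac(p,q)(v) = 0. -/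
/-!
If `Jac(p, q)` never vanishes, then `(p, q)` is a local diffeomorphism, so `q` is locally injective
on every level curve of `p`. On a level arc `p⁻¹(t) ∩ closure A` a continuous locally injective
function is monotone, so it is bounded by its values at the two endpoints, which lie in the bounded
set `B`. Hence `p` and `q` are bounded on `A`, on `closure A`, and so on the half-line
`v₀ + t • w` in `frontier A`. A polynomial bounded on a half-line is constant along it, so `w`
lies in the kernel of the Jacobian matrix at `v₀`, and `Jac(p, q)(v₀) = 0` after all.
-/

open MvPolynomial

/-- The Jacobian determinant of the polynomial map `(p, q) : ℝ² → ℝ²`. -/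
noncomputable def Jac (p q : MvPolynomial (Fin 2) ℝ) (v : Fin 2 → ℝ) : ℝ :=
  eval v (pderiv 0 p * pderiv 1 q - pderiv 1 p * pderiv 0 q)

open Set Filter Topology
open scoped Matrix

theorem HasStrictFDerivAt.exists_mem_nhds_injOn {𝕜 E F : Type*} [NontriviallyNormedField 𝕜]
    [NormedAddCommGroup E] [NormedSpace 𝕜 E] [CompleteSpace E] [NormedAddCommGroup F]
    [NormedSpace 𝕜 F] {f : E → F} {f' : E ≃L[𝕜] F} {a : E}
    (hf : HasStrictFDerivAt f (f' : E →L[𝕜] F) a) : ∃ U ∈ 𝓝 a, InjOn f U :=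
  ⟨_, hf.eventually_left_inverse, fun x hx y hy hxy => by rw [← hx, ← hy, hxy]⟩

section LocallyInjective

variable {α δ : Type*} [ConditionallyCompleteLinearOrder α] [TopologicalSpace α]
  [OrderTopology α] [DenselyOrdered α] [NoMinOrder α] [NoMaxOrder α]
  [LinearOrder δ] [TopologicalSpace δ] [OrderClosedTopology δ]

/-- A maximum at an interior point is impossible: near it the function is injective, hence
strictly monotone, hence larger on one side. -/
theorem ContinuousOn.le_max_of_locally_injOn {g : α → δ} {a b : α} (hab : a ≤ b)
    (hg : ContinuousOn g (Icc a b)) (hinj : ∀ t ∈ Ioo a b, ∃ U ∈ 𝓝 t, InjOn g U) :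
    ∀ t ∈ Icc a b, g t ≤ max (g a) (g b) := by
  obtain ⟨c, hc, hmax⟩ := isCompact_Icc.exists_isMaxOn (nonempty_Icc.2 hab) hg
  intro t ht
  refine (hmax ht).trans ?_
  rcases eq_endpoints_or_mem_Ioo_of_mem_Icc hc with rfl | rfl | hc'
  · exact le_max_left _ _
  · exact le_max_right _ _
  exfalso
  obtain ⟨U, hU, hinjU⟩ := hinj c hc'
  obtain ⟨l, u, ⟨hlc, hcu⟩, hsub⟩ :=
    mem_nhds_iff_exists_Ioo_subset.1 (inter_mem hU (Ioo_mem_nhds hc'.1 hc'.2))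
  obtain ⟨l', hl', hl'c⟩ := exists_between hlc
  obtain ⟨u', hcu', hu'⟩ := exists_between hcu
  have hsub' : Icc l' u' ⊆ U ∩ Ioo a b := (Icc_subset_Ioo hl' hu').trans hsub
  have hsubab : Icc l' u' ⊆ Icc a b := fun x hx => Ioo_subset_Icc_self (hsub' hx).2
  have hl'mem : l' ∈ Icc l' u' := left_mem_Icc.2 (hl'c.trans hcu').le
  have hu'mem : u' ∈ Icc l' u' := right_mem_Icc.2 (hl'c.trans hcu').le
  have hcmem : c ∈ Icc l' u' := ⟨hl'c.le, hcu'.le⟩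
  rcases (hg.mono hsubab).strictMonoOn_of_injOn_Icc' (hl'c.trans hcu').le
      (hinjU.mono fun x hx => (hsub' hx).1) with hmono | hanti
  · exact (hmono hcmem hu'mem hcu').not_ge (hmax (hsubab hu'mem))
  · exact (hanti hl'mem hcmem hl'c).not_ge (hmax (hsubab hl'mem))

theorem ContinuousOn.mem_uIcc_of_locally_injOn {g : α → δ} {a b : α} (hab : a ≤ b)
    (hg : ContinuousOn g (Icc a b)) (hinj : ∀ t ∈ Ioo a b, ∃ U ∈ 𝓝 t, InjOn g U) :
    ∀ t ∈ Icc a b, g t ∈ uIcc (g a) (g b) := fun t ht =>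
  ⟨ContinuousOn.le_max_of_locally_injOn (δ := δᵒᵈ) hab hg hinj t ht,
    hg.le_max_of_locally_injOn hab hinj t ht⟩

end LocallyInjective

theorem mem_uIcc_of_homeomorph_Icc {X : Type*} [TopologicalSpace X] {C : Set X}
    (γ : Icc (0 : ℝ) 1 ≃ₜ C) {g : X → ℝ} (hg : ContinuousOn g C)
    (hinj : ∀ x ∈ C, ∃ U ∈ 𝓝 x, InjOn g (U ∩ C)) :
    ∀ x ∈ C, g x ∈ uIcc (g (γ ⟨0, by norm_num⟩)) (g (γ ⟨1, by norm_num⟩)) := by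
  set φ : ℝ → X := fun t => γ (projIcc 0 1 zero_le_one t)
  have hφ : Continuous φ := continuous_subtype_val.comp (γ.continuous.comp continuous_projIcc)
  have hφC : ∀ t, φ t ∈ C := fun t => (γ _).2
  have hφinj : ∀ t ∈ Ioo (0 : ℝ) 1, ∃ U ∈ 𝓝 t, InjOn (g ∘ φ) U := by
    intro t ht
    obtain ⟨U, hU, hinjU⟩ := hinj (φ t) (hφC t)
    refine ⟨φ ⁻¹' U ∩ Ioo 0 1, inter_mem (hφ.continuousAt.preimage_mem_nhds hU)
      (Ioo_mem_nhds ht.1 ht.2), fun s hs s' hs' hgs => ?_⟩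
    have hproj := γ.injective (Subtype.ext (hinjU ⟨hs.1, hφC s⟩ ⟨hs'.1, hφC s'⟩ hgs))
    rwa [projIcc_of_mem _ (Ioo_subset_Icc_self hs.2), projIcc_of_mem _ (Ioo_subset_Icc_self hs'.2),
      Subtype.mk.injEq] at hproj
  intro x hx
  have := (hg.comp_continuous hφ hφC).continuousOn.mem_uIcc_of_locally_injOn zero_le_one hφinj
    (γ.symm ⟨x, hx⟩) (γ.symm ⟨x, hx⟩).2
  simpa [φ, projIcc_val] using this

theorem Polynomial.degree_le_zero_of_eventually_abs_le {P : Polynomial ℝ} {M : ℝ}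
    (h : ∀ᶠ t in atTop, |P.eval t| ≤ M) : P.degree ≤ 0 := by
  by_contra! hdeg
  obtain ⟨t, hgt, hle⟩ := (((P.abs_tendsto_atTop hdeg).eventually_gt_atTop M).and h).exists
  exact hgt.not_ge hle

namespace MvPolynomial

section Derivative

variable {𝕜 ι : Type*} [NontriviallyNormedField 𝕜] [Fintype ι]

theorem hasStrictFDerivAt_eval (p : MvPolynomial ι 𝕜) (v : ι → 𝕜) :
    HasStrictFDerivAt (fun x => eval x p)
      (∑ i, eval v (pderiv i p) • ContinuousLinearMap.proj i : (ι → 𝕜) →L[𝕜] 𝕜)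
      v := by
  classical
  induction p using MvPolynomial.induction_on with
  | C a =>
    refine ((hasStrictFDerivAt_const (𝕜 := 𝕜) a v).congr_fderiv ?_).congr_of_eventuallyEq
      (.of_forall fun x => by simp)
    ext u
    simp
  | add p q hp hq =>
    refine ((hp.add hq).congr_fderiv ?_).congr_of_eventuallyEq (.of_forall fun x => by simp)
    ext u
    simp [Finset.sum_add_distrib, add_mul]
  | mul_X p i hp =>
    have hX : HasStrictFDerivAt (fun x : ι → 𝕜 => x i) (ContinuousLinearMap.proj i) v :=
      (ContinuousLinearMap.proj (R := 𝕜) (φ := fun _ : ι => 𝕜) i).hasStrictFDerivAt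
    refine ((hp.mul hX).congr_fderiv ?_).congr_of_eventuallyEq (.of_forall fun x => by simp)
    ext u
    simp [pderiv_X, Pi.single_apply, add_mul, Finset.sum_add_distrib, Finset.mul_sum,
      apply_ite (eval v), ite_mul, mul_assoc]

noncomputable def jacobianMatrix (f : ι → MvPolynomial ι 𝕜) (v : ι → 𝕜) :
    Matrix ι ι 𝕜 :=
  Matrix.of fun k i => eval v (pderiv i (f k))

theorem hasStrictFDerivAt_eval_pi [CompleteSpace 𝕜] [DecidableEq ι]
    (f : ι → MvPolynomial ι 𝕜) (v : ι → 𝕜) :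
    HasStrictFDerivAt (fun x k => eval x (f k))
      (LinearMap.toContinuousLinearMap (Matrix.toLin' (jacobianMatrix f v))) v := by
  refine (hasStrictFDerivAt_pi.2 fun k => hasStrictFDerivAt_eval (f k) v).congr_fderiv ?_
  ext u k
  simp [jacobianMatrix, Matrix.mulVec, dotProduct]

theorem exists_mem_nhds_injOn_eval_pi [CompleteSpace 𝕜] [DecidableEq ι]
    (f : ι → MvPolynomial ι 𝕜) {v : ι → 𝕜} (hdet : (jacobianMatrix f v).det ≠ 0) :
    ∃ U ∈ 𝓝 v, InjOn (fun x k => eval x (f k)) U := by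
  have hD : (LinearMap.toContinuousLinearMap (Matrix.toLin' (jacobianMatrix f v))).det ≠ 0 := by
    rwa [ContinuousLinearMap.det, LinearMap.coe_toContinuousLinearMap, LinearMap.det_toLin']
  have hf := hasStrictFDerivAt_eval_pi f v
  rw [← ContinuousLinearMap.coe_toContinuousLinearEquivOfDetNeZero _ hD] at hf
  exact hf.exists_mem_nhds_injOn

end Derivative

theorem eval_add_smul_eq_eval_aeval {ι : Type*} (r : MvPolynomial ι ℝ) (v₀ w : ι → ℝ)
    (t : ℝ) :
    eval (v₀ + t • w) r =
      (aeval (fun i => Polynomial.C (v₀ i) + Polynomial.C (w i) * Polynomial.X) r).eval t := by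
  rw [← Polynomial.coe_aeval_eq_eval, ← AlgHom.comp_apply, comp_aeval, aeval_eq_eval]
  congr 2
  funext i
  simp only [Pi.add_apply, Pi.smul_apply, smul_eq_mul, map_add, map_mul, Polynomial.aeval_C,
    Polynomial.aeval_X, Algebra.algebraMap_self_apply]
  ring

/-- On the half-line, `r` is a univariate polynomial bounded at `+∞`, hence constant. -/
theorem sum_pderiv_mul_eq_zero_of_eventually_abs_le {ι : Type*} [Fintype ι]
    (r : MvPolynomial ι ℝ) (v₀ w : ι → ℝ) {M : ℝ}
    (h : ∀ᶠ t : ℝ in atTop, |eval (v₀ + t • w) r| ≤ M) :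
    ∑ i, eval v₀ (pderiv i r) * w i = 0 := by
  set P := aeval (fun i => Polynomial.C (v₀ i) + Polynomial.C (w i) * Polynomial.X) r
  have hP : P.degree ≤ 0 := Polynomial.degree_le_zero_of_eventually_abs_le
    (h.mono fun t ht => by rwa [← eval_add_smul_eq_eval_aeval])
  have hconst : (fun t : ℝ => eval (v₀ + t • w) r) = fun _ => P.coeff 0 := by
    funext t
    rw [eval_add_smul_eq_eval_aeval, ← Polynomial.eval_C (x := t) (a := P.coeff 0),
      ← Polynomial.eq_C_of_degree_le_zero hP]
  have hline : HasDerivAt (fun t : ℝ => v₀ + t • w) w 0 := by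
    simpa using ((hasDerivAt_id (0 : ℝ)).smul_const w).const_add v₀
  have hderiv :=
    (hasStrictFDerivAt_eval r (v₀ + (0 : ℝ) • w)).hasFDerivAt.comp_hasDerivAt 0 hline
  rw [zero_smul, add_zero, Function.comp_def, hconst] at hderiv
  simpa using hderiv.unique (hasDerivAt_const 0 _)

end MvPolynomial

theorem Jac_eq_det_jacobianMatrix (p q : MvPolynomial (Fin 2) ℝ) (v : Fin 2 → ℝ) :
    Jac p q v = (jacobianMatrix ![p, q] v).det := by
  simp [Jac, Matrix.det_fin_two, jacobianMatrix]

theorem exists_mem_nhds_injOn_eval_inter_level {p q : MvPolynomial (Fin 2) ℝ} {v : Fin 2 → ℝ}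
    (hJ : Jac p q v ≠ 0) (s : ℝ) :
    ∃ U ∈ 𝓝 v, InjOn (fun x => eval x q) (U ∩ {x | eval x p = s}) := by
  rw [Jac_eq_det_jacobianMatrix] at hJ
  obtain ⟨U, hU, hinj⟩ := exists_mem_nhds_injOn_eval_pi ![p, q] hJ
  refine ⟨U, hU, fun x hx y hy hq => hinj hx.1 hy.1 (funext fun k => ?_)⟩
  fin_cases k
  · exact hx.2.trans hy.2.symm
  · exact hq

theorem abs_eval_le_of_homeomorph_Icc {p q : MvPolynomial (Fin 2) ℝ} (hJ : ∀ v, Jac p q v ≠ 0)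
    {s R : ℝ} {C : Set (Fin 2 → ℝ)} (hC : C ⊆ {x | eval x p = s})
    (γ : Icc (0 : ℝ) 1 ≃ₜ C)
    (h0 : |eval (γ ⟨0, by norm_num⟩ : Fin 2 → ℝ) p| ≤ R ∧
      |eval (γ ⟨0, by norm_num⟩ : Fin 2 → ℝ) q| ≤ R)
    (h1 : |eval (γ ⟨1, by norm_num⟩ : Fin 2 → ℝ) q| ≤ R) :
    ∀ x ∈ C, |eval x p| ≤ R ∧ |eval x q| ≤ R := by
  intro x hx
  have hq := mem_uIcc_of_homeomorph_Icc γ (continuous_eval q).continuousOn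
    (fun y _ => (exists_mem_nhds_injOn_eval_inter_level (hJ y) s).imp fun U ⟨hU, hinj⟩ =>
      ⟨hU, hinj.mono (inter_subset_inter_right _ hC)⟩) x hx
  refine ⟨by rw [hC hx, ← hC (γ _).2]; exact h0.1, abs_le.2 (uIcc_subset_Icc ?_ ?_ hq)⟩
  exacts [abs_le.1 h0.2, abs_le.1 h1]

theorem exists_forall_abs_eval_le {ι : Type*} [Fintype ι] {B : Set (ι → ℝ)}
    (hB : Bornology.IsBounded B) (p q : MvPolynomial ι ℝ) :
    ∃ R, ∀ x ∈ B, |eval x p| ≤ R ∧ |eval x q| ≤ R := by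
  obtain ⟨R, hR⟩ := hB.isCompact_closure.exists_bound_of_continuousOn
    ((continuous_eval p).prodMk (continuous_eval q)).continuousOn
  exact ⟨R, fun x hx => norm_prod_le_iff.1 (hR x (subset_closure hx))⟩

/-- Theorem 1 (glacial tongues). Let `p ∈ ℝ[x,y]` and suppose `B ⊆ A ⊆ ℝ²` satisfy:
`B` is bounded; for every `t` the set `p⁻¹(t) ∩ A` is empty, or contained in `B`, or
`p⁻¹(t) ∩ closure A` is homeomorphic to the segment `[0,1]` with both endpoints in `B`;
and the boundary of `A` contains a half-line. Then every `q ∈ ℝ[x,y]` has a point where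
the Jacobian determinant of `(p,q)` vanishes. -/
theorem jacobian_vanishes_of_glacial_tongue
    (p : MvPolynomial (Fin 2) ℝ) (A B : Set (Fin 2 → ℝ))
    (hBbdd : Bornology.IsBounded B)
    (hlevel : ∀ t : ℝ,
      ({x | eval x p = t} ∩ A = ∅) ∨
      ({x | eval x p = t} ∩ A ⊆ B) ∨
      (∃ h : Set.Icc (0:ℝ) 1 ≃ₜ ({x | eval x p = t} ∩ closure A : Set (Fin 2 → ℝ)),
        (h ⟨0, by norm_num⟩ : Fin 2 → ℝ) ∈ B ∧ (h ⟨1, by norm_num⟩ : Fin 2 → ℝ) ∈ B))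
    (v₀ w : Fin 2 → ℝ) (hw : w ≠ 0)
    (hL : {x | ∃ t : ℝ, 0 ≤ t ∧ x = v₀ + t • w} ⊆ frontier A) :
    ∀ q : MvPolynomial (Fin 2) ℝ, ∃ v : Fin 2 → ℝ, Jac p q v = 0 := by
  intro q
  by_contra! hJ
  obtain ⟨R, hR⟩ := exists_forall_abs_eval_le hBbdd p q
  have hA : ∀ y ∈ A, |eval y p| ≤ R ∧ |eval y q| ≤ R := by
    intro y hy
    rcases hlevel (eval y p) with hempty | hsub | ⟨γ, h0, h1⟩
    · exact (eq_empty_iff_forall_notMem.1 hempty y ⟨rfl, hy⟩).elim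
    · exact hR y (hsub ⟨rfl, hy⟩)
    · exact abs_eval_le_of_homeomorph_Icc hJ inter_subset_left γ (hR _ h0) (hR _ h1).2 y
        ⟨rfl, subset_closure hy⟩
  have hclA : ∀ y ∈ closure A, |eval y p| ≤ R ∧ |eval y q| ≤ R :=
    closure_minimal hA <| (isClosed_le (continuous_eval p).abs continuous_const).inter
      (isClosed_le (continuous_eval q).abs continuous_const)
  have hker : jacobianMatrix ![p, q] v₀ *ᵥ w = 0 := by
    funext k
    refine sum_pderiv_mul_eq_zero_of_eventually_abs_le _ v₀ w (M := R)
      ((eventually_ge_atTop 0).mono fun t ht => ?_)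
    have hbound := hclA _ (frontier_subset_closure (hL ⟨t, ht, rfl⟩))
    fin_cases k
    exacts [hbound.1, hbound.2]
  exact hJ v₀ <| (Jac_eq_det_jacobianMatrix p q v₀).trans
    (Matrix.exists_mulVec_eq_zero_iff.1 ⟨w, hw, hker⟩)
end

section
/- The polynomial p(x,y) = x(1+xy) has no real Jacobian mate: for every real polynomial q in two variables there exists a point v ∈ ℝ² at which the Jacobian determinant of (p,q) vanishes. -/
open MvPolynomial

/-!
For `p = x + x²y` we have `Jac(p, q) = (1 + 2xy) q_y - x² q_x`. As `ℝ²` is connected, a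
nowhere vanishing Jacobian has constant sign, and after replacing `q` by `-q` it is positive.
On the axis `x = 0` it equals `q_y`, so `y ↦ q(0, y)` is a strictly increasing polynomial and
tends to `-∞` as `y → -∞`. On the other hand, on the level curve `p = ε`, parametrized over
`x > 0` by `y = (ε - x) / x²`, the derivative of `q` in `x` is `-Jac / x² < 0`. Comparing the
points `(x, y)` and `(1, ε - 1)` of the level curve through `(x, y)` and letting `x → 0⁺` gives
`q(1, -1) ≤ q(0, y)` for every `y`, a contradiction.
-/

open Filter Set

theorem MvPolynomial.hasDerivAt_eval_comp {𝕜 σ : Type*} [NontriviallyNormedField 𝕜] [Fintype σ]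
    (q : MvPolynomial σ 𝕜) {c : 𝕜 → σ → 𝕜} {c' : σ → 𝕜} {t : 𝕜}
    (hc : ∀ i, HasDerivAt (fun s => c s i) (c' i) t) :
    HasDerivAt (fun s => eval (c s) q) (∑ i, c' i * eval (c t) (pderiv i q)) t := by
  classical
  induction q using MvPolynomial.induction_on with
  | C a => simpa using hasDerivAt_const t a
  | add p r hp hr =>
    simp only [map_add, mul_add, Finset.sum_add_distrib]
    exact hp.add hr
  | mul_X p i hp =>
    simp only [map_mul, eval_X]
    refine (hp.mul (hc i)).congr_deriv ?_
    simp [pderiv_X, Pi.single_apply, apply_ite (eval _), mul_add, Finset.sum_add_distrib,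
      Finset.mul_sum, add_comm, mul_left_comm, mul_comm]

theorem MvPolynomial.hasDerivAt_eval_vecCons {𝕜 : Type*} [NontriviallyNormedField 𝕜]
    (q : MvPolynomial (Fin 2) 𝕜) {a b : 𝕜 → 𝕜} {a' b' t : 𝕜}
    (ha : HasDerivAt a a' t) (hb : HasDerivAt b b' t) :
    HasDerivAt (fun s => eval ![a s, b s] q)
      (a' * eval ![a t, b t] (pderiv 0 q) + b' * eval ![a t, b t] (pderiv 1 q)) t := by
  simpa [Fin.sum_univ_two] using q.hasDerivAt_eval_comp (c := fun s => ![a s, b s])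
    (c' := ![a', b']) (Fin.forall_fin_two.2 ⟨ha, hb⟩)

theorem MvPolynomial.exists_polynomial_eval_eq {R σ : Type*} [CommSemiring R]
    (q : MvPolynomial σ R) (g : σ → Polynomial R) :
    ∃ P : Polynomial R, ∀ y, P.eval y = eval (fun i => (g i).eval y) q :=
  ⟨eval₂ Polynomial.C g q, fun y => by
    rw [polynomial_eval_eval₂]; congr; ext; simp⟩

theorem Polynomial.tendsto_atBot_of_strictMono (P : Polynomial ℝ) (hP : StrictMono (P.eval ·)) :
    Tendsto (P.eval ·) atBot atBot := by
  have hdeg : 0 < P.degree := by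
    by_contra! h
    have := hP zero_lt_one
    rw [eq_C_of_degree_le_zero h] at this
    simp at this
  refine (tendsto_atBot_of_monotone hP.monotone).resolve_right ?_
  rintro ⟨l, hl⟩
  exact not_tendsto_nhds_of_tendsto_atTop (P.abs_tendsto_atBot hdeg) _ hl.abs

theorem Continuous.forall_pos_or_forall_neg {X α : Type*} [TopologicalSpace X]
    [PreconnectedSpace X] [LinearOrder α] [TopologicalSpace α] [OrderClosedTopology α] [Zero α]
    {f : X → α} (hf : Continuous f) (h0 : ∀ x, f x ≠ 0) :
    (∀ x, 0 < f x) ∨ (∀ x, f x < 0) := by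
  by_contra! h
  obtain ⟨⟨a, ha⟩, ⟨b, hb⟩⟩ := h
  obtain ⟨x, hx⟩ := intermediate_value_univ a b hf ⟨ha, hb⟩
  exact h0 x hx

theorem continuous_jac (p q : MvPolynomial (Fin 2) ℝ) : Continuous (Jac p q) :=
  continuous_eval _

theorem jac_neg_right (p q : MvPolynomial (Fin 2) ℝ) (v : Fin 2 → ℝ) :
    Jac p (-q) v = -Jac p q v := by
  simp only [Jac, map_neg, eval_sub, eval_mul]
  ring

theorem jac_X_add_X_sq_mul_X (q : MvPolynomial (Fin 2) ℝ) (v : Fin 2 → ℝ) :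
    Jac (X 0 + X 0 ^ 2 * X 1) q v
      = (1 + 2 * v 0 * v 1) * eval v (pderiv 1 q) - v 0 ^ 2 * eval v (pderiv 0 q) := by
  simp only [Jac, map_add, map_sub, map_mul, map_pow, Derivation.leibniz,
    Derivation.leibniz_pow, pderiv_X, Pi.single_eq_same, Pi.single_eq_of_ne one_ne_zero,
    Pi.single_eq_of_ne zero_ne_one, smul_eq_mul, nsmul_eq_mul, eval_X, map_one, map_zero,
    Nat.cast_ofNat, map_ofNat, Nat.add_one_sub_one, pow_one]
  ring

theorem strictMono_eval_zero {q : MvPolynomial (Fin 2) ℝ}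
    (hq : ∀ v, 0 < Jac (X 0 + X 0 ^ 2 * X 1) q v) :
    StrictMono fun y => eval ![0, y] q := by
  refine strictMono_of_hasDerivAt_pos
    (fun y => q.hasDerivAt_eval_vecCons (hasDerivAt_const y 0) (hasDerivAt_id y)) fun y => ?_
  simpa [jac_X_add_X_sq_mul_X] using hq ![0, y]

theorem hasDerivAt_eval_levelCurve (q : MvPolynomial (Fin 2) ℝ) (ε : ℝ) {x : ℝ} (hx : x ≠ 0) :
    HasDerivAt (fun s => eval ![s, (ε - s) / s ^ 2] q)
      (-Jac (X 0 + X 0 ^ 2 * X 1) q ![x, (ε - x) / x ^ 2] / x ^ 2) x := by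
  have hy : HasDerivAt (fun s => (ε - s) / s ^ 2)
      ((-1 * x ^ 2 - (ε - x) * (2 * x)) / (x ^ 2) ^ 2) x := by
    simpa using ((hasDerivAt_id x).const_sub ε).fun_div (hasDerivAt_pow 2 x) (pow_ne_zero 2 hx)
  refine (q.hasDerivAt_eval_vecCons (hasDerivAt_id x) hy).congr_deriv ?_
  rw [jac_X_add_X_sq_mul_X]
  simp
  field_simp
  ring

theorem strictAntiOn_eval_levelCurve {q : MvPolynomial (Fin 2) ℝ}
    (hq : ∀ v, 0 < Jac (X 0 + X 0 ^ 2 * X 1) q v) (ε : ℝ) :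
    StrictAntiOn (fun x => eval ![x, (ε - x) / x ^ 2] q) (Ioi 0) := by
  refine strictAntiOn_of_hasDerivWithinAt_neg (convex_Ioi 0)
    (fun x hx => (hasDerivAt_eval_levelCurve q ε (ne_of_gt hx)).continuousAt.continuousWithinAt)
    (fun x hx => (hasDerivAt_eval_levelCurve q ε (ne_of_gt (interior_subset hx))).hasDerivWithinAt)
    (fun x hx => ?_)
  have hx : 0 < x := interior_subset hx
  exact div_neg_of_neg_of_pos (neg_neg_of_pos (hq _)) (by positivity)

theorem eval_one_neg_one_le {q : MvPolynomial (Fin 2) ℝ}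
    (hq : ∀ v, 0 < Jac (X 0 + X 0 ^ 2 * X 1) q v) (y : ℝ) :
    eval ![1, -1] q ≤ eval ![0, y] q := by
  have hlt : ∀ x ∈ Ioo (0 : ℝ) 1, eval ![1, x + x ^ 2 * y - 1] q < eval ![x, y] q := by
    rintro x ⟨hx0, hx1⟩
    have := strictAntiOn_eval_levelCurve hq (x + x ^ 2 * y) hx0 (zero_lt_one' ℝ) hx1
    simpa [hx0.ne'] using this
  have hcurve : Continuous fun x : ℝ => eval ![1, x + x ^ 2 * y - 1] q :=
    (continuous_eval q).comp (by fun_prop)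
  have hline : Continuous fun x : ℝ => eval ![x, y] q := (continuous_eval q).comp (by fun_prop)
  have := le_of_tendsto_of_tendsto ((hcurve.tendsto 0).mono_left nhdsWithin_le_nhds)
    ((hline.tendsto 0).mono_left nhdsWithin_le_nhds)
    (eventually_of_mem (Ioo_mem_nhdsGT zero_lt_one) fun x hx => (hlt x hx).le)
  simpa using this

theorem not_forall_jac_pos (q : MvPolynomial (Fin 2) ℝ) :
    ¬ ∀ v, 0 < Jac (X 0 + X 0 ^ 2 * X 1) q v := by
  intro hq
  obtain ⟨P, hP⟩ := q.exists_polynomial_eval_eq ![0, Polynomial.X]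
  have hPq : (P.eval ·) = fun y => eval ![0, y] q := by
    ext y
    rw [hP]
    congr
    ext i
    fin_cases i <;> simp
  have hlim := P.tendsto_atBot_of_strictMono (hPq ▸ strictMono_eval_zero hq)
  obtain ⟨y, hy⟩ := (hlim.eventually_lt_atBot (eval ![1, -1] q)).exists
  exact (eval_one_neg_one_le hq y).not_gt (congrFun hPq y ▸ hy)

/-- The polynomial `p(x,y) = x(1+xy) = x + x²y` has no real Jacobian mate: for every
real polynomial `q` in two variables the Jacobian determinant of `(p,q)` vanishes at
some point of `ℝ²`. -/
theorem no_jacobian_mate_x_mul_one_add_xy :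
    ∀ q : MvPolynomial (Fin 2) ℝ,
      ∃ v : Fin 2 → ℝ, Jac (X 0 + X 0 ^ 2 * X 1) q v = 0 := by
  intro q
  by_contra! h
  rcases (continuous_jac _ q).forall_pos_or_forall_neg h with hpos | hneg
  · exact not_forall_jac_pos q hpos
  · exact not_forall_jac_pos (-q) fun v => by rw [jac_neg_right]; exact neg_pos.2 (hneg v)
end

section
/- Let p ∈ ℝ[x,y] and suppose the curve p = 0 contains, for all large t > 0, the point (x̃(t), ỹ(t)) where x̃(t) = a_k t^k + o(t^k) and ỹ(t) = b_l t^l + o(t^l) with a_k ≠ 0, b_l ≠ 0, and (x̃(t), ỹ(t)) → ∞ as t → ∞. Then the line {(i,j) ∈ ℝ² : ki + lj = d}, where d = max{ki+lj : coefficient of x^i y^j in p is nonzero}, meets the Newton polygon of p in at least two lattice points with nonzero coefficient; moreover max(k,l) > 0. -/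
/-!
Substitute the branch into `p` and divide by `t ^ d`. The monomial `x^i y^j` contributes
`coeff · a^i b^j · t^(k i + l j - d) · (1 + o(1))`, so `p(x̃ t, ỹ t) / t ^ d` tends to the
`(k, l)`-weighted homogeneous component of `p` of degree `d` evaluated at `(a, b)`. As `p`
vanishes on the branch this value is `0`, which is impossible if a single monomial of `p` lies on
the line `k i + l j = d`, because `a, b ≠ 0`. If `k, l ≤ 0`, both coordinates of the branch
converge, so it cannot tend to infinity.
-/

open MvPolynomial Filter

open Finset Finsupp Topology

theorem zpow_sum₀ {G₀ ι : Type*} [CommGroupWithZero G₀] {t : G₀} (ht : t ≠ 0) (s : Finset ι)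
    (f : ι → ℤ) : t ^ (∑ i ∈ s, f i) = ∏ i ∈ s, t ^ f i := by
  classical
  induction s using Finset.induction_on with
  | empty => simp
  | insert i s hi ih => rw [sum_insert hi, prod_insert hi, zpow_add₀ ht, ih]

theorem tendsto_zpow_atTop_of_nonpos {j : ℤ} (hj : j ≤ 0) :
    Tendsto (fun t : ℝ => t ^ j) atTop (𝓝 (if j = 0 then 1 else 0)) := by
  rcases hj.lt_or_eq with hj | rfl
  · simpa [hj.ne] using tendsto_zpow_atTop_zero hj
  · simp

theorem tendsto_of_tendsto_div_mul_zpow {f : ℝ → ℝ} {c : ℝ} {j : ℤ} (hc : c ≠ 0) (hj : j ≤ 0)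
    (hf : Tendsto (fun t => f t / (c * t ^ j)) atTop (𝓝 1)) :
    Tendsto f atTop (𝓝 (c * if j = 0 then 1 else 0)) := by
  have hprod := hf.mul ((tendsto_zpow_atTop_of_nonpos hj).const_mul c)
  rw [one_mul] at hprod
  refine hprod.congr' ?_
  filter_upwards [eventually_gt_atTop 0] with t ht
  exact div_mul_cancel₀ _ (mul_ne_zero hc (zpow_ne_zero j ht.ne'))

theorem weight_fin_two (k l : ℤ) (m : Fin 2 →₀ ℕ) : weight ![k, l] m = k * m 0 + l * m 1 := by
  simp [weight_eq_sum, Fin.sum_univ_two, mul_comm]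

section Curve

variable {σ : Type*} [Fintype σ] {w : σ → ℤ} {a : σ → ℝ} {x : ℝ → σ → ℝ}

theorem zpow_weight {G₀ : Type*} [CommGroupWithZero G₀] {t : G₀} (ht : t ≠ 0) (m : σ →₀ ℕ) :
    t ^ weight w m = ∏ i, (t ^ w i) ^ m i := by
  rw [weight_eq_sum, zpow_sum₀ ht]
  refine prod_congr rfl fun i _ => ?_
  rw [nsmul_eq_mul, mul_comm, zpow_mul, zpow_natCast]

theorem tendsto_prod_pow_div_zpow (ha : ∀ i, a i ≠ 0)
    (hx : ∀ i, Tendsto (fun t => x t i / (a i * t ^ w i)) atTop (𝓝 1))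
    (m : σ →₀ ℕ) {d : ℤ} (hmd : weight w m ≤ d) :
    Tendsto (fun t => (∏ i, x t i ^ m i) / t ^ d) atTop
      (𝓝 (if weight w m = d then ∏ i, a i ^ m i else 0)) := by
  have hratio : Tendsto (fun t => ∏ i, (x t i / (a i * t ^ w i)) ^ m i) atTop (𝓝 1) := by
    simpa using tendsto_finsetProd univ fun i _ => (hx i).pow (m i)
  have hpow : Tendsto (fun t : ℝ => t ^ (weight w m - d)) atTop
      (𝓝 (if weight w m = d then 1 else 0)) := by
    simpa [sub_eq_zero] using tendsto_zpow_atTop_of_nonpos (sub_nonpos.2 hmd)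
  have hprod := (hratio.mul hpow).const_mul (∏ i, a i ^ m i)
  rw [one_mul, mul_ite, mul_one, mul_zero] at hprod
  refine hprod.congr' ?_
  filter_upwards [eventually_gt_atTop 0] with t ht
  have ht0 := ht.ne'
  rw [zpow_sub₀ ht0, zpow_weight ht0]
  simp only [div_pow, mul_pow, prod_div_distrib, prod_mul_distrib]
  have hA : ∏ i, a i ^ m i ≠ 0 := prod_ne_zero_iff.2 fun i _ => pow_ne_zero _ (ha i)
  have hT : ∏ i, (t ^ w i) ^ m i ≠ 0 :=
    prod_ne_zero_iff.2 fun i _ => pow_ne_zero _ (zpow_ne_zero _ ht0)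
  field_simp

theorem tendsto_eval_div_zpow (p : MvPolynomial σ ℝ) (ha : ∀ i, a i ≠ 0)
    (hx : ∀ i, Tendsto (fun t => x t i / (a i * t ^ w i)) atTop (𝓝 1))
    {d : ℤ} (hd : ∀ m ∈ p.support, weight w m ≤ d) :
    Tendsto (fun t => eval (x t) p / t ^ d) atTop
      (𝓝 (eval a (weightedHomogeneousComponent w d p))) := by
  classical
  rw [weightedHomogeneousComponent_apply, map_sum, sum_filter]
  simp only [eval_monomial, Finsupp.prod_fintype _ _ (fun _ => pow_zero _)]
  simp_rw [eval_eq', sum_div, mul_div_assoc]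
  refine tendsto_finsetSum _ fun m hm => ?_
  have hterm := (tendsto_prod_pow_div_zpow ha hx m (hd m hm)).const_mul (coeff m p)
  rwa [mul_ite, mul_zero] at hterm

end Curve

theorem exists_ne_weight_eq_of_eval_weightedHomogeneousComponent_eq_zero {R σ M : Type*}
    [CommRing R] [IsDomain R] [AddCommMonoid M] {w : σ → M} {a : σ → R} (ha : ∀ i, a i ≠ 0)
    {p : MvPolynomial σ R} {d : M} (h : eval a (weightedHomogeneousComponent w d p) = 0)
    {m₀ : σ →₀ ℕ} (hm₀ : m₀ ∈ p.support) (hm₀d : weight w m₀ = d) :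
    ∃ m ∈ p.support, m ≠ m₀ ∧ weight w m = d := by
  classical
  by_contra! hunique
  have hsingle : {m ∈ p.support | weight w m = d} = {m₀} :=
    eq_singleton_iff_unique_mem.2 ⟨mem_filter.2 ⟨hm₀, hm₀d⟩, fun m hm =>
      by_contra fun hne => hunique m (mem_filter.1 hm).1 hne (mem_filter.1 hm).2⟩
  rw [weightedHomogeneousComponent_apply, hsingle, sum_singleton, eval_monomial] at h
  exact mul_ne_zero (MvPolynomial.mem_support_iff.1 hm₀)
    (Finsupp.prod_ne_zero_iff.2 fun i _ => pow_ne_zero _ (ha i)) h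

theorem branch_at_infinity_gives_outer_edge_general
    (p : MvPolynomial (Fin 2) ℝ) (k l : ℤ)
    (a b : ℝ) (ha : a ≠ 0) (hb : b ≠ 0)
    (xc yc : ℝ → ℝ)
    (hx : Tendsto (fun t => xc t / (a * t ^ k)) atTop (nhds 1))
    (hy : Tendsto (fun t => yc t / (b * t ^ l)) atTop (nhds 1))
    (hinf : Tendsto (fun t => ‖(xc t, yc t)‖) atTop atTop)
    (hzero : ∀ᶠ t in atTop, eval ![xc t, yc t] p = 0)
    (d : ℤ) (hd : ∀ m ∈ p.support, k * (m 0 : ℤ) + l * (m 1 : ℤ) ≤ d)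
    (hdmax : ∃ m ∈ p.support, k * (m 0 : ℤ) + l * (m 1 : ℤ) = d) :
    (∃ m₁ ∈ p.support, ∃ m₂ ∈ p.support, m₁ ≠ m₂ ∧
        k * (m₁ 0 : ℤ) + l * (m₁ 1 : ℤ) = d ∧
        k * (m₂ 0 : ℤ) + l * (m₂ 1 : ℤ) = d) ∧
      0 < max k l := by
  have hab : ∀ i, ![a, b] i ≠ 0 := Fin.forall_fin_two.2 ⟨ha, hb⟩
  have hcurve : ∀ i, Tendsto (fun t => ![xc t, yc t] i / (![a, b] i * t ^ ![k, l] i)) atTop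
      (𝓝 1) := Fin.forall_fin_two.2 ⟨hx, hy⟩
  have hlim := tendsto_eval_div_zpow p hab hcurve (d := d) fun m hm => by
    simpa only [weight_fin_two] using hd m hm
  have hlim_zero : Tendsto (fun t => eval ![xc t, yc t] p / t ^ d) atTop (𝓝 0) :=
    tendsto_const_nhds.congr' <| by filter_upwards [hzero] with t ht; simp [ht]
  obtain ⟨m₀, hm₀, hm₀d⟩ := hdmax
  obtain ⟨m, hm, hne, hmd⟩ := exists_ne_weight_eq_of_eval_weightedHomogeneousComponent_eq_zero
    hab (tendsto_nhds_unique hlim hlim_zero) hm₀ (by rwa [weight_fin_two])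
  refine ⟨⟨m, hm, m₀, hm₀, hne, by rwa [← weight_fin_two], hm₀d⟩, ?_⟩
  by_contra! hkl
  have hxc := tendsto_of_tendsto_div_mul_zpow ha (le_of_max_le_left hkl) hx
  have hyc := tendsto_of_tendsto_div_mul_zpow hb (le_of_max_le_right hkl) hy
  exact not_tendsto_atTop_of_tendsto_nhds (hxc.prodMk_nhds hyc).norm hinf

/-- Lemma 2. If the curve `p = 0` contains, for all large `t`, a point
`(xc(t), yc(t))` with `xc(t) = a_k t^k (1+o(1))`, `yc(t) = b_l t^l (1+o(1))`,
`a_k, b_l ≠ 0`, tending to infinity, then the supporting line `{k i + l j = d}`,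
`d = max{k i + l j : (i,j) ∈ supp p}`, meets the support of `p` in at least two
points, and `max k l > 0`; i.e. `(k,l)` is a normal vector of an outer edge of the
Newton polygon of `p`. -/
theorem branch_at_infinity_gives_outer_edge
    (p : MvPolynomial (Fin 2) ℝ) (hp : p ≠ 0) (k l : ℤ)
    (a b : ℝ) (ha : a ≠ 0) (hb : b ≠ 0)
    (xc yc : ℝ → ℝ)
    (hx : Tendsto (fun t => xc t / (a * t ^ k)) atTop (nhds 1))
    (hy : Tendsto (fun t => yc t / (b * t ^ l)) atTop (nhds 1))
    (hinf : Tendsto (fun t => ‖(xc t, yc t)‖) atTop atTop)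
    (hzero : ∀ᶠ t in atTop, eval ![xc t, yc t] p = 0)
    (d : ℤ) (hd : ∀ m ∈ p.support, k * (m 0 : ℤ) + l * (m 1 : ℤ) ≤ d)
    (hdmax : ∃ m ∈ p.support, k * (m 0 : ℤ) + l * (m 1 : ℤ) = d) :
    (∃ m₁ ∈ p.support, ∃ m₂ ∈ p.support, m₁ ≠ m₂ ∧
        k * (m₁ 0 : ℤ) + l * (m₁ 1 : ℤ) = d ∧
        k * (m₂ 0 : ℤ) + l * (m₂ 1 : ℤ) = d) ∧
      0 < max k l :=
  branch_at_infinity_gives_outer_edge_general p k l a b ha hb xc yc hx hy hinf hzero d hd hdmax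
end

section
/- Let h : [0, M] → ℝ be continuously differentiable with h(0) = h(M) = 0 and h(y) > 0 for 0 < y < M. Then there exist t₀ > 0 and points 0 < a < b < M such that h is strictly increasing on [0,a] with h(a) = t₀, h(y) > t₀ for a < y < b, h is strictly decreasing on [b,M] with h(b) = t₀, and h'(y) ≠ 0 for y ∈ (0,a] ∪ [b,M). -/
open Set

/-- Setup before Claim 4. Let `h` be (the restriction of) a nonzero real polynomial on
`[0, M]` with `h 0 = h M = 0` and `h > 0` on `(0, M)`. Then there are `t₀ > 0` and
`0 < a < b < M` such that `h` strictly increases from `0` to `t₀` on `[0,a]`,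
`h > t₀` on `(a,b)`, `h` strictly decreases from `t₀` to `0` on `[b,M]`, and
`h' ≠ 0` on `(0,a] ∪ [b,M)`. -/
theorem polynomial_tongue_profile
    (P : Polynomial ℝ) (hP : P ≠ 0) (h : ℝ → ℝ) (hh : h = fun y => P.eval y)
    (M : ℝ) (hM : 0 < M) (h0 : h 0 = 0) (hM0 : h M = 0)
    (hpos : ∀ y ∈ Ioo 0 M, 0 < h y) :
    ∃ t₀ > (0:ℝ), ∃ a b : ℝ, 0 < a ∧ a < b ∧ b < M ∧
      StrictMonoOn h (Icc 0 a) ∧ h a = t₀ ∧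
      (∀ y ∈ Ioo a b, t₀ < h y) ∧
      StrictAntiOn h (Icc b M) ∧ h b = t₀ ∧
      (∀ y ∈ Ioc 0 a ∪ Ico b M, deriv h y ≠ 0) := by
  have hcont : Continuous h := by rw [hh]; exact P.continuous
  have hderiv : ∀ x, deriv h x = P.derivative.eval x := by
    intro x; rw [hh]; exact Polynomial.deriv (p := P)
  -- the derivative polynomial is nonzero
  have hPd : P.derivative ≠ 0 := by
    intro hd
    obtain ⟨c, hc⟩ := Polynomial.natDegree_eq_zero.mp
      (Polynomial.natDegree_eq_zero_of_derivative_eq_zero hd)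
    have h1 : h 0 = c := by rw [hh, ← hc]; simp
    have h2 : 0 < h (M/2) := hpos _ ⟨by linarith, by linarith⟩
    have h3 : h (M/2) = c := by rw [hh, ← hc]; simp
    rw [h0] at h1; rw [h3, ← h1] at h2; exact lt_irrefl _ h2
  set R := P.derivative.roots.toFinset with hR
  -- ε₁ : no roots in (0, ε₁]
  classical
  set T1 : Finset ℝ := insert (M/2) (R.filter (fun x => 0 < x)) with hT1
  have hT1ne : T1.Nonempty := ⟨M/2, Finset.mem_insert_self _ _⟩
  have hT1pos : ∀ x ∈ T1, 0 < x := by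
    intro x hx
    rcases Finset.mem_insert.mp hx with hx | hx
    · rw [hx]; linarith
    · exact (Finset.mem_filter.mp hx).2
  set ε₁ := T1.min' hT1ne / 2 with hε₁
  have hε₁pos : 0 < ε₁ := by
    have := hT1pos _ (T1.min'_mem hT1ne); rw [hε₁]; linarith
  have hε₁le : ε₁ ≤ M/4 := by
    have := T1.min'_le (M/2) (Finset.mem_insert_self _ _); rw [hε₁]; linarith
  -- ε₂ : no roots in [M-ε₂, M)
  set T2 : Finset ℝ := insert (M/2) ((R.filter (fun x => x < M)).image (fun x => M - x)) with hT2
  have hT2ne : T2.Nonempty := ⟨M/2, Finset.mem_insert_self _ _⟩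
  have hT2pos : ∀ x ∈ T2, 0 < x := by
    intro x hx
    rcases Finset.mem_insert.mp hx with hx | hx
    · rw [hx]; linarith
    · obtain ⟨y, hy, rfl⟩ := Finset.mem_image.mp hx
      have := (Finset.mem_filter.mp hy).2; linarith
  set ε₂ := T2.min' hT2ne / 2 with hε₂
  have hε₂pos : 0 < ε₂ := by
    have := hT2pos _ (T2.min'_mem hT2ne); rw [hε₂]; linarith
  have hε₂le : ε₂ ≤ M/4 := by
    have := T2.min'_le (M/2) (Finset.mem_insert_self _ _); rw [hε₂]; linarith
  set ε := min ε₁ ε₂ with hε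
  have hεpos : 0 < ε := lt_min hε₁pos hε₂pos
  have hεle : ε ≤ M/4 := le_trans (min_le_left _ _) hε₁le
  -- no roots of P' in (0, ε]
  have hnoroot1 : ∀ x ∈ Ioc (0:ℝ) ε, P.derivative.eval x ≠ 0 := by
    intro x hx hx0
    have hmem : x ∈ T1 := by
      apply Finset.mem_insert_of_mem
      refine Finset.mem_filter.mpr ⟨?_, hx.1⟩
      rw [hR]
      exact Multiset.mem_toFinset.mpr ((Polynomial.mem_roots hPd).mpr hx0)
    have := T1.min'_le _ hmem
    have h2 : x ≤ ε := hx.2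
    have h3 : ε ≤ ε₁ := min_le_left _ _
    rw [hε₁] at h3
    linarith [hT1pos _ (T1.min'_mem hT1ne)]
  -- no roots of P' in [M-ε, M)
  have hnoroot2 : ∀ x ∈ Ico (M - ε) M, P.derivative.eval x ≠ 0 := by
    intro x hx hx0
    have hmem : M - x ∈ T2 := by
      apply Finset.mem_insert_of_mem
      refine Finset.mem_image.mpr ⟨x, Finset.mem_filter.mpr ⟨?_, hx.2⟩, rfl⟩
      rw [hR]
      exact Multiset.mem_toFinset.mpr ((Polynomial.mem_roots hPd).mpr hx0)
    have := T2.min'_le _ hmem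
    have h2 : M - ε ≤ x := hx.1
    have h3 : ε ≤ ε₂ := min_le_right _ _
    rw [hε₂] at h3
    linarith [hT2pos _ (T2.min'_mem hT2ne)]
  have hqcont : Continuous fun x => P.derivative.eval x := P.derivative.continuous
  -- some point in (0, ε) where deriv > 0
  have hεM : ε < M := by linarith
  have hεIoo : ε ∈ Ioo (0:ℝ) M := ⟨hεpos, hεM⟩
  obtain ⟨c, hcm, hcd⟩ := exists_deriv_eq_slope h hεpos hcont.continuousOn
    (by rw [hh]; exact fun x _ => (P.differentiable x).differentiableWithinAt)
  have hcpos : 0 < P.derivative.eval c := by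
    rw [← hderiv]
    rw [hcd, h0]
    have := hpos ε hεIoo
    apply div_pos (by linarith) (by linarith)
  -- deriv positive on (0, ε]
  have hqpos : ∀ x ∈ Ioc (0:ℝ) ε, 0 < P.derivative.eval x := by
    intro x hx
    rcases lt_trichotomy (P.derivative.eval x) 0 with hlt | heq | hgt
    · exfalso
      have hcmem : c ∈ Ioc (0:ℝ) ε := ⟨hcm.1, le_of_lt hcm.2⟩
      have hsub : uIcc x c ⊆ Ioc (0:ℝ) ε := ordConnected_Ioc.uIcc_subset hx hcmem
      have h0mem : (0:ℝ) ∈ uIcc (P.derivative.eval x) (P.derivative.eval c) := by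
        rw [Set.mem_uIcc]; left; exact ⟨le_of_lt hlt, le_of_lt hcpos⟩
      obtain ⟨z, hz, hz0⟩ := intermediate_value_uIcc hqcont.continuousOn h0mem
      exact hnoroot1 z (hsub hz) hz0
    · exact absurd heq (hnoroot1 x hx)
    · exact hgt
  -- some point in (M-ε, M) where deriv < 0
  have hMεIoo : M - ε ∈ Ioo (0:ℝ) M := ⟨by linarith, by linarith⟩
  obtain ⟨c', hcm', hcd'⟩ := exists_deriv_eq_slope h (show M - ε < M by linarith)
    hcont.continuousOn
    (by rw [hh]; exact fun x _ => (P.differentiable x).differentiableWithinAt)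
  have hcneg : P.derivative.eval c' < 0 := by
    rw [← hderiv, hcd', hM0]
    have h1 := hpos _ hMεIoo
    have h2 : 0 < M - (M - ε) := by linarith
    exact div_neg_of_neg_of_pos (by linarith) h2
  have hqneg : ∀ x ∈ Ico (M - ε) M, P.derivative.eval x < 0 := by
    intro x hx
    rcases lt_trichotomy (P.derivative.eval x) 0 with hlt | heq | hgt
    · exact hlt
    · exact absurd heq (hnoroot2 x hx)
    · exfalso
      have hcmem : c' ∈ Ico (M - ε) M := ⟨le_of_lt hcm'.1, hcm'.2⟩
      have hsub : uIcc x c' ⊆ Ico (M - ε) M := ordConnected_Ico.uIcc_subset hx hcmem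
      have h0mem : (0:ℝ) ∈ uIcc (P.derivative.eval x) (P.derivative.eval c') := by
        rw [Set.mem_uIcc]; right; exact ⟨le_of_lt hcneg, le_of_lt hgt⟩
      obtain ⟨z, hz, hz0⟩ := intermediate_value_uIcc hqcont.continuousOn h0mem
      exact hnoroot2 z (hsub hz) hz0
  -- h strictly monotone on [0, ε], strictly anti on [M-ε, M]
  have hmono : StrictMonoOn h (Icc 0 ε) := by
    apply strictMonoOn_of_deriv_pos (convex_Icc 0 ε) hcont.continuousOn
    intro x hx
    rw [interior_Icc] at hx
    rw [hderiv]
    exact hqpos x ⟨hx.1, le_of_lt hx.2⟩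
  have hanti : StrictAntiOn h (Icc (M - ε) M) := by
    apply strictAntiOn_of_deriv_neg (convex_Icc _ _) hcont.continuousOn
    intro x hx
    rw [interior_Icc] at hx
    rw [hderiv]
    exact hqneg x ⟨le_of_lt hx.1, hx.2⟩
  -- minimum of h over [ε, M-ε]
  have hεle2 : ε ≤ M - ε := by linarith
  obtain ⟨w, hw, hwmin⟩ := (isCompact_Icc (a := ε) (b := M - ε)).exists_isMinOn
    (nonempty_Icc.mpr hεle2) hcont.continuousOn
  set m := h w with hm
  have hmpos : 0 < m := hpos w ⟨lt_of_lt_of_le hεpos hw.1, lt_of_le_of_lt hw.2 (by linarith)⟩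
  set t₀ := m / 2 with ht₀
  have ht₀pos : 0 < t₀ := by rw [ht₀]; linarith
  have ht₀m : t₀ < m := by rw [ht₀]; linarith
  -- find a in (0, ε) with h a = t₀
  have hεmem : ε ∈ Icc ε (M - ε) := ⟨le_refl _, hεle2⟩
  have hhε : m ≤ h ε := hwmin hεmem
  obtain ⟨a, ha, hha⟩ := intermediate_value_Icc (le_of_lt hεpos) hcont.continuousOn
    (show t₀ ∈ Icc (h 0) (h ε) from ⟨by rw [h0]; linarith, by linarith⟩)
  have ha0 : 0 < a := by
    rcases lt_or_eq_of_le ha.1 with h1 | h1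
    · exact h1
    · exfalso; rw [← h1, h0] at hha; linarith
  have haε : a < ε := by
    rcases lt_or_eq_of_le ha.2 with h1 | h1
    · exact h1
    · exfalso; rw [h1] at hha; linarith
  -- find b in (M-ε, M) with h b = t₀
  have hMεmem : M - ε ∈ Icc ε (M - ε) := ⟨hεle2, le_refl _⟩
  have hhMε : m ≤ h (M - ε) := hwmin hMεmem
  obtain ⟨b, hb, hhb⟩ := intermediate_value_Icc' (show M - ε ≤ M by linarith)
    hcont.continuousOn
    (show t₀ ∈ Icc (h M) (h (M - ε)) from ⟨by rw [hM0]; linarith, by linarith⟩)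
  have hbM : b < M := by
    rcases lt_or_eq_of_le hb.2 with h1 | h1
    · exact h1
    · exfalso; rw [h1, hM0] at hhb; linarith
  have hbMε : M - ε < b := by
    rcases lt_or_eq_of_le hb.1 with h1 | h1
    · exact h1
    · exfalso; rw [← h1] at hhb; linarith
  refine ⟨t₀, ht₀pos, a, b, ha0, by linarith, hbM, ?_, hha, ?_, ?_, hhb, ?_⟩
  · exact hmono.mono (Icc_subset_Icc le_rfl (le_of_lt haε))
  · -- h > t₀ on (a, b)
    intro y hy
    rcases le_or_gt y ε with h1 | h1
    · have : h a < h y := hmono ⟨le_of_lt ha0, le_of_lt haε⟩ ⟨by linarith [hy.1, ha0], h1⟩ hy.1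
      linarith [hha ▸ this]
    · rcases le_or_gt y (M - ε) with h2 | h2
      · have : m ≤ h y := hwmin ⟨le_of_lt h1, h2⟩
        linarith
      · have : h y > h b := hanti ⟨le_of_lt h2, by linarith [hy.2]⟩
          ⟨le_of_lt hbMε, le_of_lt hbM⟩ hy.2
        linarith [hhb ▸ this]
  · exact hanti.mono (Icc_subset_Icc (le_of_lt hbMε) le_rfl)
  · intro y hy
    rw [hderiv]
    rcases hy with hy | hy
    · exact ne_of_gt (hqpos y ⟨hy.1, le_trans hy.2 (le_of_lt haε)⟩)
    · exact ne_of_lt (hqneg y ⟨le_trans (le_of_lt hbMε) hy.1, hy.2⟩)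
end
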